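/- arXiv:math/0602613 — 2 statements merged into one kernel-verified Lean document; each statement's English description precedes it below -/
import Mathlib

section
/- Under the conditions ensuring convergence (e.g., |q| < p = 1, |z| < 1), the product formula ₁Φ₀((a,b);—;(p,q),z) · ₁Φ₀((b,a);—;(p,q),z) = 1 holds, i.e., Σ_n ((a,b);(p,q))_n/((p,q);(p,q))_n z^n and Σ_n ((b,a);(p,q))_n/((p,q);(p,q))_n z^n are multiplicative inverses. -/
/-- The `(p,q)`-shifted factorial `((a,b);(p,q))ₙ = ∏_{j=0}^{n-1} (a pʲ - b qʲ)`. -/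
def pqPoch (a b p q : ℂ) (n : ℕ) : ℂ := ∏ j ∈ Finset.range n, (a * p ^ j - b * q ^ j)

/-- The series `₁Φ₀((a,b);—;(p,q),z)`. -/
noncomputable def Phi10 (a b p q z : ℂ) : ℂ :=
  ∑' n : ℕ, pqPoch a b p q n / pqPoch p q p q n * z ^ n

/-!
Let `F_{a,b}(X) = Σ ((a,b);(p,q))ₙ / ((p,q);(p,q))ₙ Xⁿ` as a formal power series. The recursion
of the coefficients is the functional equation `(1 - aX) F_{a,b}(pX) = (1 - bX) F_{a,b}(qX)`.
Multiplying it by the same equation for `F_{b,a}` and cancelling `(1 - aX)(1 - bX)` shows that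
`G = F_{a,b} F_{b,a}` satisfies `G(pX) = G(qX)`, so `(pⁿ - qⁿ) gₙ = 0`; as `|q| < |p|` this forces
`gₙ = 0` for `n ≥ 1`, i.e. `G = 1`. The coefficients are bounded by `((|a| + |b|)/(|p| - |q|))ⁿ`,
so both series converge absolutely near `0` and their Cauchy product is the value of `G`.
-/

open PowerSeries Finset

theorem pow_ne_pow_of_norm_lt {R : Type*} [NormedDivisionRing R] {p q : R} (hqp : ‖q‖ < ‖p‖)
    {n : ℕ} (hn : n ≠ 0) : p ^ n ≠ q ^ n := by
  intro h
  have hlt : ‖q‖ ^ n < ‖p‖ ^ n := pow_lt_pow_left₀ hqp (norm_nonneg q) hn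
  rw [← norm_pow, ← norm_pow, h] at hlt
  exact lt_irrefl _ hlt

theorem PowerSeries.coeff_eq_zero_of_rescale_eq {R : Type*} [CommRing R] [NoZeroDivisors R]
    {f : R⟦X⟧} {p q : R} (h : rescale p f = rescale q f) {n : ℕ} (hn : p ^ n ≠ q ^ n) :
    coeff n f = 0 := by
  have hn' := congrArg (coeff n) h
  rw [coeff_rescale, coeff_rescale, ← sub_eq_zero, ← sub_mul] at hn'
  exact (mul_eq_zero.mp hn').resolve_left (sub_ne_zero.mpr hn)

theorem tsum_coeff_mul_pow_mul_tsum {R : Type*} [NormedCommRing R] [CompleteSpace R]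
    {f g : R⟦X⟧} {z : R} (hf : Summable fun n => ‖coeff n f * z ^ n‖)
    (hg : Summable fun n => ‖coeff n g * z ^ n‖) :
    (∑' n, coeff n f * z ^ n) * (∑' n, coeff n g * z ^ n) = ∑' n, coeff n (f * g) * z ^ n := by
  rw [tsum_mul_tsum_eq_tsum_sum_antidiagonal_of_summable_norm hf hg]
  refine tsum_congr fun n => ?_
  rw [coeff_mul, sum_mul]
  refine sum_congr rfl fun kl hkl => ?_
  rw [← mem_antidiagonal.mp hkl, pow_add]
  ring

theorem pqPoch_succ (a b p q : ℂ) (n : ℕ) :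
    pqPoch a b p q (n + 1) = pqPoch a b p q n * (a * p ^ n - b * q ^ n) :=
  prod_range_succ _ n

theorem pqPoch_self_ne_zero {p q : ℂ} (hqp : ‖q‖ < ‖p‖) (n : ℕ) : pqPoch p q p q n ≠ 0 := by
  refine prod_ne_zero_iff.mpr fun j _ => ?_
  rw [← pow_succ', ← pow_succ']
  exact sub_ne_zero.mpr (pow_ne_pow_of_norm_lt hqp j.succ_ne_zero)

section Coefficients

variable (a b p q : ℂ)

noncomputable def phi10Coeff (n : ℕ) : ℂ := pqPoch a b p q n / pqPoch p q p q n

/-- The formal power series `F_{a,b}` whose value at `z` is `Phi10 a b p q z`. -/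
noncomputable def phi10Series : ℂ⟦X⟧ := mk (phi10Coeff a b p q)

variable {a b p q}

theorem phi10Coeff_succ_mul (hqp : ‖q‖ < ‖p‖) (n : ℕ) :
    phi10Coeff a b p q (n + 1) * (p ^ (n + 1) - q ^ (n + 1)) =
      phi10Coeff a b p q n * (a * p ^ n - b * q ^ n) := by
  have hden := pqPoch_self_ne_zero hqp n
  have hfactor : p ^ n * p - q ^ n * q ≠ 0 := by
    rw [← pow_succ, ← pow_succ]
    exact sub_ne_zero.mpr (pow_ne_pow_of_norm_lt hqp n.succ_ne_zero)
  rw [phi10Coeff, phi10Coeff, pqPoch_succ, pqPoch_succ p q p q, pow_succ p, pow_succ q]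
  field_simp

theorem phi10Series_rescale_eq (hqp : ‖q‖ < ‖p‖) :
    (1 - C a * X) * rescale p (phi10Series a b p q) =
      (1 - C b * X) * rescale q (phi10Series a b p q) := by
  ext (_ | n)
  · simp [phi10Series, rescale_mk]
  · have hshift : ∀ r s : ℂ, coeff (n + 1) (C r * X * rescale s (phi10Series a b p q)) =
        r * (s ^ n * phi10Coeff a b p q n) := fun r s => by
      rw [mul_assoc, mul_comm X, ← mul_assoc, coeff_succ_mul_X, coeff_C_mul, phi10Series,
        rescale_mk, coeff_mk]
    simp only [sub_mul, one_mul, map_sub, hshift]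
    rw [phi10Series, rescale_mk, rescale_mk, coeff_mk, coeff_mk]
    linear_combination phi10Coeff_succ_mul hqp n

theorem phi10Series_mul_swap (hqp : ‖q‖ < ‖p‖) :
    phi10Series a b p q * phi10Series b a p q = 1 := by
  set G := phi10Series a b p q * phi10Series b a p q
  have hG : rescale p G = rescale q G := by
    have hunit : ((1 : ℂ⟦X⟧) - C a * X) * (1 - C b * X) ≠ 0 := fun h => by
      simpa using congrArg constantCoeff h
    refine mul_left_cancel₀ hunit ?_
    calc (1 - C a * X) * (1 - C b * X) * rescale p G
        = ((1 - C a * X) * rescale p (phi10Series a b p q)) *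
            ((1 - C b * X) * rescale p (phi10Series b a p q)) := by
          rw [map_mul]; ring
      _ = ((1 - C b * X) * rescale q (phi10Series a b p q)) *
            ((1 - C a * X) * rescale q (phi10Series b a p q)) := by
          rw [phi10Series_rescale_eq hqp, phi10Series_rescale_eq hqp]
      _ = (1 - C a * X) * (1 - C b * X) * rescale q G := by
          rw [map_mul]; ring
  ext (_ | n)
  · simp [G, phi10Series, phi10Coeff, pqPoch]
  · rw [coeff_one, if_neg n.succ_ne_zero]
    exact coeff_eq_zero_of_rescale_eq hG (pow_ne_pow_of_norm_lt hqp n.succ_ne_zero)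

theorem norm_phi10Coeff_le (hqp : ‖q‖ < ‖p‖) (n : ℕ) :
    ‖phi10Coeff a b p q n‖ ≤ ((‖a‖ + ‖b‖) / (‖p‖ - ‖q‖)) ^ n := by
  have hpq : 0 < ‖p‖ - ‖q‖ := sub_pos.mpr hqp
  have hp : 0 < ‖p‖ := (norm_nonneg q).trans_lt hqp
  rw [phi10Coeff, pqPoch, pqPoch, ← prod_div_distrib, norm_prod]
  refine (prod_le_prod (fun j _ => norm_nonneg _) fun j _ => ?_).trans_eq
    (by rw [prod_const, card_range])
  have hqpj : ‖q‖ ^ j ≤ ‖p‖ ^ j := pow_le_pow_left₀ (norm_nonneg q) hqp.le j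
  have hnum : ‖a * p ^ j - b * q ^ j‖ ≤ (‖a‖ + ‖b‖) * ‖p‖ ^ j := by
    refine (norm_sub_le _ _).trans ?_
    simp only [norm_mul, norm_pow]
    nlinarith [norm_nonneg a, norm_nonneg b]
  have hden : (‖p‖ - ‖q‖) * ‖p‖ ^ j ≤ ‖p * p ^ j - q * q ^ j‖ := by
    refine le_trans ?_ (norm_sub_norm_le _ _)
    simp only [norm_mul, norm_pow]
    nlinarith [norm_nonneg q, pow_nonneg (norm_nonneg q) j]
  rw [norm_div]
  calc ‖a * p ^ j - b * q ^ j‖ / ‖p * p ^ j - q * q ^ j‖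
      ≤ ((‖a‖ + ‖b‖) * ‖p‖ ^ j) / ((‖p‖ - ‖q‖) * ‖p‖ ^ j) :=
        div_le_div₀ (by positivity) hnum (by positivity) hden
    _ = (‖a‖ + ‖b‖) / (‖p‖ - ‖q‖) := mul_div_mul_right _ _ (by positivity)

theorem summable_norm_coeff_phi10Series_mul_pow (hqp : ‖q‖ < ‖p‖) {z : ℂ}
    (hz : (‖a‖ + ‖b‖) / (‖p‖ - ‖q‖) * ‖z‖ < 1) :
    Summable fun n => ‖coeff n (phi10Series a b p q) * z ^ n‖ := by
  have hK : 0 ≤ (‖a‖ + ‖b‖) / (‖p‖ - ‖q‖) := by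
    have := sub_pos.mpr hqp
    positivity
  refine (summable_geometric_of_lt_one (by positivity) hz).of_nonneg_of_le
    (fun n => norm_nonneg _) fun n => ?_
  rw [phi10Series, coeff_mk, norm_mul, norm_pow, mul_pow]
  exact mul_le_mul_of_nonneg_right (norm_phi10Coeff_le hqp n) (by positivity)

end Coefficients

theorem Phi10_mul_swap_eq_one_general (a b p q : ℂ) (hqp : ‖q‖ < ‖p‖) :
    ∃ ε > 0, ∀ z : ℂ, ‖z‖ < ε →
      Phi10 a b p q z * Phi10 b a p q z = 1 := by
  set K : ℝ := (‖a‖ + ‖b‖) / (‖p‖ - ‖q‖)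
  have hK : 0 ≤ K := by
    have := sub_pos.mpr hqp
    positivity
  refine ⟨(K + 1)⁻¹, by positivity, fun z hz => ?_⟩
  have hKz : K * ‖z‖ < 1 := by
    rw [← mul_one (K + 1)⁻¹, lt_inv_mul_iff₀ (by positivity)] at hz
    nlinarith [norm_nonneg z]
  have hKz' : (‖b‖ + ‖a‖) / (‖p‖ - ‖q‖) * ‖z‖ < 1 := by rwa [add_comm]
  have hPhi (c d : ℂ) : Phi10 c d p q z = ∑' n, coeff n (phi10Series c d p q) * z ^ n := by
    simp only [phi10Series, coeff_mk, phi10Coeff, Phi10]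
  rw [hPhi, hPhi, tsum_coeff_mul_pow_mul_tsum (summable_norm_coeff_phi10Series_mul_pow hqp hKz)
    (summable_norm_coeff_phi10Series_mul_pow hqp hKz'), phi10Series_mul_swap hqp]
  simp [coeff_one]

theorem Phi10_mul_swap_eq_one (a b p q : ℂ) (hqp : ‖q‖ < ‖p‖) (hp : ‖p‖ ≤ 1) :
    ∃ ε > 0, ∀ z : ℂ, ‖z‖ < ε →
      Phi10 a b p q z * Phi10 b a p q z = 1 :=
  Phi10_mul_swap_eq_one_general a b p q hqp
end

section
/- For a natural number n, 0 < q < p (or generic p, q with nonvanishing denominators), the terminating (p,q)-binomial identity holds: p^{-n(n+1)/2} ∏_{k=1}^{n} (p^{k} - p^{n} z q^{k-1}) = Σ_{k=0}^{n} [n choose k]_{p,q} (pq)^{k(k-1)/2} (-z)^k. -/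
/-- `((p,q);(p,q))ₘ = ∏_{j=1}^{m} (pʲ - qʲ)`. -/
def pqFact (p q : ℂ) (m : ℕ) : ℂ := ∏ j ∈ Finset.range m, (p ^ (j + 1) - q ^ (j + 1))

/-- The `(p,q)`-binomial coefficient. -/
noncomputable def pqBinomCoef (p q : ℂ) (n k : ℕ) : ℂ :=
  pqFact p q n / (pqFact p q k * pqFact p q (n - k))

lemma pqFact_zero (p q : ℂ) : pqFact p q 0 = 1 := by simp [pqFact]

lemma pqFact_succ (p q : ℂ) (m : ℕ) :
    pqFact p q (m + 1) = pqFact p q m * (p ^ (m + 1) - q ^ (m + 1)) :=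
  Finset.prod_range_succ _ _

lemma pqFact_ne_zero (p q : ℂ) (m : ℕ) (h : ∀ j, 1 ≤ j → j ≤ m → p ^ j ≠ q ^ j) :
    pqFact p q m ≠ 0 := by
  refine Finset.prod_ne_zero_iff.mpr fun j hj => sub_ne_zero.mpr ?_
  exact h (j + 1) (by omega) (by simpa using Finset.mem_range.mp hj)

lemma pqBinom_zero (p q : ℂ) (m : ℕ) (hm : pqFact p q m ≠ 0) :
    pqBinomCoef p q m 0 = 1 := by
  simp [pqBinomCoef, pqFact_zero, div_self hm]

lemma pqBinom_self (p q : ℂ) (m : ℕ) (hm : pqFact p q m ≠ 0) :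
    pqBinomCoef p q m m = 1 := by
  simp [pqBinomCoef, pqFact_zero, div_self hm]

lemma pqBinom_pascal (p q : ℂ) (a b : ℕ)
    (h : ∀ j, 1 ≤ j → j ≤ a + b + 2 → p ^ j ≠ q ^ j) :
    pqBinomCoef p q (a + b + 2) (a + 1)
      = p ^ (a + 1) * pqBinomCoef p q (a + b + 1) (a + 1)
        + q ^ (b + 1) * pqBinomCoef p q (a + b + 1) a := by
  have hA : p ^ (a + 1) - q ^ (a + 1) ≠ 0 := sub_ne_zero.mpr (h _ (by omega) (by omega))
  have hB : p ^ (b + 1) - q ^ (b + 1) ≠ 0 := sub_ne_zero.mpr (h _ (by omega) (by omega))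
  have hFa : pqFact p q a ≠ 0 := pqFact_ne_zero p q a fun j h1 h2 => h j h1 (by omega)
  have hFb : pqFact p q b ≠ 0 := pqFact_ne_zero p q b fun j h1 h2 => h j h1 (by omega)
  have e1 : pqFact p q (a + b + 2) = pqFact p q (a + b + 1) * (p ^ (a + b + 2) - q ^ (a + b + 2)) := by
    have := pqFact_succ p q (a + b + 1)
    simpa [show a + b + 1 + 1 = a + b + 2 from by omega] using this
  unfold pqBinomCoef
  rw [show a + b + 2 - (a + 1) = b + 1 from by omega,
      show a + b + 1 - (a + 1) = b from by omega,
      show a + b + 1 - a = b + 1 from by omega,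
      e1, pqFact_succ p q a, pqFact_succ p q b]
  field_simp
  ring

lemma tri_succ (k : ℕ) : (k + 1) * (k + 1 - 1) / 2 = k * (k - 1) / 2 + k := by
  have e : (k + 1) * (k + 1 - 1) = k * (k - 1) + k * 2 := by
    cases k with
    | zero => rfl
    | succ m => simp [Nat.succ_sub_one]; ring
  rw [e, Nat.add_mul_div_right _ _ (by norm_num : (0:ℕ) < 2)]

lemma tri_succ' (n : ℕ) : (n + 1) * (n + 1 + 1) / 2 = n * (n + 1) / 2 + (n + 1) := by
  have e : (n + 1) * (n + 1 + 1) = n * (n + 1) + (n + 1) * 2 := by ring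
  rw [e, Nat.add_mul_div_right _ _ (by norm_num : (0:ℕ) < 2)]

theorem terminating_pq_binomial (p q z : ℂ) (n : ℕ) (hp : p ≠ 0)
    (h : ∀ j, 1 ≤ j → j ≤ n → p ^ j ≠ q ^ j) :
    (p ^ (n * (n + 1) / 2))⁻¹ * ∏ k ∈ Finset.range n, (p ^ (k + 1) - p ^ n * z * q ^ k) =
      ∑ k ∈ Finset.range (n + 1),
        pqBinomCoef p q n k * (p * q) ^ (k * (k - 1) / 2) * (-z) ^ k := by
  induction n generalizing z with
  | zero => simp [pqBinomCoef, pqFact]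
  | succ n ih =>
    have h' : ∀ j, 1 ≤ j → j ≤ n → p ^ j ≠ q ^ j := fun j h1 h2 => h j h1 (by omega)
    have hFn : pqFact p q n ≠ 0 := pqFact_ne_zero p q n h'
    have hFn1 : pqFact p q (n + 1) ≠ 0 := pqFact_ne_zero p q (n + 1) h
    have key := ih (p * z) h'
    have hpn : (p : ℂ) ^ (n + 1) ≠ 0 := pow_ne_zero _ hp
    have hpT : (p : ℂ) ^ (n * (n + 1) / 2) ≠ 0 := pow_ne_zero _ hp
    have hprod : ∏ k ∈ Finset.range (n + 1), (p ^ (k + 1) - p ^ (n + 1) * z * q ^ k)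
        = (∏ k ∈ Finset.range n, (p ^ (k + 1) - p ^ n * (p * z) * q ^ k))
          * (p ^ (n + 1) * (1 - q ^ n * z)) := by
      rw [Finset.prod_range_succ]
      congr 1
      · exact Finset.prod_congr rfl fun k _ => by ring
      · ring
    rw [hprod, tri_succ' n,
        pow_add, mul_inv]
    have step1 : (p ^ (n * (n + 1) / 2))⁻¹ * (p ^ (n + 1))⁻¹ *
        ((∏ k ∈ Finset.range n, (p ^ (k + 1) - p ^ n * (p * z) * q ^ k))
          * (p ^ (n + 1) * (1 - q ^ n * z)))
        = (1 - q ^ n * z) *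
          ((p ^ (n * (n + 1) / 2))⁻¹ * ∏ k ∈ Finset.range n, (p ^ (k + 1) - p ^ n * (p * z) * q ^ k)) := by
      field_simp
    rw [step1, key]
    -- now the summation manipulation
    have expand : (1 - q ^ n * z) *
        (∑ k ∈ Finset.range (n + 1),
          pqBinomCoef p q n k * (p * q) ^ (k * (k - 1) / 2) * (-(p * z)) ^ k)
        = (∑ k ∈ Finset.range (n + 1),
            pqBinomCoef p q n k * (p * q) ^ (k * (k - 1) / 2) * p ^ k * (-z) ^ k)
          + (∑ k ∈ Finset.range (n + 1),
            q ^ n * (pqBinomCoef p q n k * (p * q) ^ (k * (k - 1) / 2) * p ^ k) * (-z) ^ (k + 1)) := by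
      rw [Finset.mul_sum, ← Finset.sum_add_distrib]
      refine Finset.sum_congr rfl fun k _ => ?_
      rw [show (-(p * z)) = p * (-z) from by ring, mul_pow, pow_succ]
      ring
    rw [expand]
    rw [Finset.sum_range_succ' (fun k => pqBinomCoef p q n k * (p * q) ^ (k * (k - 1) / 2) * p ^ k * (-z) ^ k) n]
    rw [Finset.sum_range_succ (fun k => q ^ n * (pqBinomCoef p q n k * (p * q) ^ (k * (k - 1) / 2) * p ^ k) * (-z) ^ (k + 1)) n]
    rw [Finset.sum_range_succ (fun k => pqBinomCoef p q (n + 1) k * (p * q) ^ (k * (k - 1) / 2) * (-z) ^ k) (n + 1)]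
    rw [Finset.sum_range_succ' (fun k => pqBinomCoef p q (n + 1) k * (p * q) ^ (k * (k - 1) / 2) * (-z) ^ k) n]
    have hmid : ∀ k ∈ Finset.range n,
        (pqBinomCoef p q n (k + 1) * (p * q) ^ ((k + 1) * (k + 1 - 1) / 2) * p ^ (k + 1) * (-z) ^ (k + 1))
          + q ^ n * (pqBinomCoef p q n k * (p * q) ^ (k * (k - 1) / 2) * p ^ k) * (-z) ^ (k + 1)
        = pqBinomCoef p q (n + 1) (k + 1) * (p * q) ^ ((k + 1) * (k + 1 - 1) / 2) * (-z) ^ (k + 1) := by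
      intro k hk
      have hkn : k < n := Finset.mem_range.mp hk
      have hpas : pqBinomCoef p q (n + 1) (k + 1)
          = p ^ (k + 1) * pqBinomCoef p q n (k + 1) + q ^ (n - k) * pqBinomCoef p q n k := by
        have := pqBinom_pascal p q k (n - 1 - k) (fun j h1 h2 => h j h1 (by omega))
        rw [show k + (n - 1 - k) + 2 = n + 1 from by omega,
            show k + (n - 1 - k) + 1 = n from by omega,
            show (n - 1 - k) + 1 = n - k from by omega] at this
        exact this
      rw [hpas, tri_succ k, pow_add,
          show (q : ℂ) ^ n = q ^ (n - k) * q ^ k from by rw [← pow_add]; congr 1; omega]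
      ring
    have hsum : (∑ k ∈ Finset.range n,
          (pqBinomCoef p q n (k + 1) * (p * q) ^ ((k + 1) * (k + 1 - 1) / 2) * p ^ (k + 1) * (-z) ^ (k + 1)))
        + (∑ k ∈ Finset.range n,
          q ^ n * (pqBinomCoef p q n k * (p * q) ^ (k * (k - 1) / 2) * p ^ k) * (-z) ^ (k + 1))
        = ∑ k ∈ Finset.range n,
          pqBinomCoef p q (n + 1) (k + 1) * (p * q) ^ ((k + 1) * (k + 1 - 1) / 2) * (-z) ^ (k + 1) := by
      rw [← Finset.sum_add_distrib]
      exact Finset.sum_congr rfl hmid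
    have h0 : pqBinomCoef p q n 0 = pqBinomCoef p q (n + 1) 0 := by
      rw [pqBinom_zero p q n hFn, pqBinom_zero p q (n + 1) hFn1]
    have htop : q ^ n * (pqBinomCoef p q n n * (p * q) ^ (n * (n - 1) / 2) * p ^ n) * (-z) ^ (n + 1)
        = pqBinomCoef p q (n + 1) (n + 1) * (p * q) ^ ((n + 1) * (n + 1 - 1) / 2) * (-z) ^ (n + 1) := by
      rw [pqBinom_self p q n hFn, pqBinom_self p q (n + 1) hFn1,
          tri_succ n, pow_add, mul_pow]
      ring
    linear_combination hsum + htop + ((-z) ^ 0 * (p * q) ^ (0 * (0 - 1) / 2) * p ^ 0) * h0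
end
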